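/- For a graded commutative ring B and a homogeneous element h of positive degree, the open set D_+(h) of homogeneous primes not containing h (and not containing the irrelevant ideal) is in natural inclusion-preserving bijection with the prime ideals of the degree-zero part B[h^{-1}]_0 of the localization of B at h. -/
import Mathlib

open AlgebraicGeometry TopCat

/-- For an `ℕ`-graded commutative ring `B` and a homogeneous element `h` of
positive degree `d`, the basic open `D₊(h)` of `Proj B` (homogeneous primes not
containing the irrelevant ideal and not containing `h`) is in natural
inclusion-preserving bijection with the prime spectrum of the degree-zero part
`B[h⁻¹]₀` of the localization of `B` at the powers of `h`. -/
theorem proj_basicOpen_equiv_spec_degree_zero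
    {B : Type*} [CommRing B] (𝒜 : ℕ → Submodule ℤ B) [GradedAlgebra 𝒜]
    (h : B) (d : ℕ) (hd : 0 < d) (hh : h ∈ 𝒜 d) :
    ∃ e : {p : ProjectiveSpectrum 𝒜 // h ∉ p.asHomogeneousIdeal} ≃
        PrimeSpectrum (HomogeneousLocalization.Away 𝒜 h),
      ∀ p q : {p : ProjectiveSpectrum 𝒜 // h ∉ p.asHomogeneousIdeal},
        p.1.asHomogeneousIdeal.toIdeal ≤ q.1.asHomogeneousIdeal.toIdeal ↔
          (e p).asIdeal ≤ (e q).asIdeal := by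
  let e₀ := TopCat.homeoOfIso (projIsoSpecTopComponent hh hd)
  refine ⟨e₀.toEquiv, fun p q => ?_⟩
  have h1 : p.1.asHomogeneousIdeal.toIdeal ≤ q.1.asHomogeneousIdeal.toIdeal ↔ p.1 ⤳ q.1 := by
    rw [specializes_iff_mem_closure, ← ProjectiveSpectrum.le_iff_mem_closure]
    exact Iff.rfl
  have h2 : p.1 ⤳ q.1 ↔ p ⤳ q := Topology.IsInducing.subtypeVal.specializes_iff
  have h3 : p ⤳ q ↔ e₀ p ⤳ e₀ q := e₀.isInducing.specializes_iff.symm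
  have h4 : e₀ p ⤳ e₀ q ↔ (e₀ p).asIdeal ≤ (e₀ q).asIdeal :=
    (PrimeSpectrum.le_iff_specializes _ _).symm
  exact ((h1.trans h2).trans h3).trans h4
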